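/- Let ν be a Borel probability measure on (0,1] with L^q-spectrum β_ν and fixed point q̄_ν = inf{q>0 : β_ν(q) ≤ q}. Then q̄_ν = sup_{α ≥ 0} β̂_ν(α)/(1+α), where β̂_ν(α) = inf_{q∈ℝ} (β_ν(q) + αq) is the Legendre transform of β_ν. -/

import Mathlib

open MeasureTheory
open scoped Classical

/-- The dyadic interval `A_k^n = (k·2^{-n}, (k+1)·2^{-n}]`. -/
def dyadic (n k : ℕ) : Set ℝ := Set.Ioc ((k : ℝ) / 2 ^ n) (((k : ℝ) + 1) / 2 ^ n)

/-- `betan ν n q = (1/(n log 2)) log Σ_{C ∈ D_{ν,n}} ν(C)^q`, the `n`-th approximation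
of the `L^q`-spectrum, where `D_{ν,n}` is the set of dyadic intervals of generation `n`
with positive `ν`-measure. -/
noncomputable def betan (ν : Measure ℝ) (n : ℕ) (q : ℝ) : ℝ :=
  (1 / ((n : ℝ) * Real.log 2)) *
    Real.log (∑ k ∈ (Finset.range (2 ^ n)).filter (fun k => ν (dyadic n k) ≠ 0),
      ((ν (dyadic n k)).toReal) ^ q)

/-- The `L^q`-spectrum `β_ν(q) = limsup_n betan ν n q`. -/
noncomputable def lqSpectrum (ν : Measure ℝ) (q : ℝ) : ℝ :=
  Filter.atTop.limsup (fun n => betan ν n q)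

/-- The `L^q`-spectrum with values in `EReal` (so that it is meaningful for all `q ∈ ℝ`). -/
noncomputable def lqSpectrumE (ν : Measure ℝ) (q : ℝ) : EReal :=
  Filter.atTop.limsup (fun n => ((betan ν n q : ℝ) : EReal))

/-- The Legendre transform `β̂_ν(α) = inf_{q ∈ ℝ} (β_ν(q) + αq)`. -/
noncomputable def legendre (ν : Measure ℝ) (α : ℝ) : EReal :=
  ⨅ q : ℝ, lqSpectrumE ν q + ((α * q : ℝ) : EReal)

/-!
Each `betan ν n` is convex in `q` by Hölder's inequality, so `β_ν` is convex where it is finite;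
moreover `β_ν(1) = 0`, `β_ν ≥ 0` on `(-∞, 1]` and `β_ν(q) ≥ -q` for `q ≥ 0`.
If `q > 0` and `β_ν(q) ≤ q`, then `β̂_ν(α) ≤ β_ν(q) + αq ≤ (1 + α) q`, whence the supremum is at
most `q̄_ν`. Conversely, for `0 ≤ t < q̄_ν` (or `t = q̄_ν = 0`) the point `(t, t)` lies on or below
the graph of `β_ν`, so by convexity some line of slope `-α` through it stays below `β_ν`;
`β_ν(1) = 0` forces `α ≥ 0`, and `β_ν(q) ≥ t - α (q - t)` for all `q` says `β̂_ν(α) ≥ (1 + α) t`.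
-/

open Set Filter Real Finset

namespace ConvexOn

variable {D : Set ℝ} {f : ℝ → ℝ}

theorem sub_slope_mul_le (hf : ConvexOn ℝ D f) {p t q c : ℝ} (hp : p ∈ D) (hq : q ∈ D)
    (hpt : p < t) (htq : t < q) (hc : c ≤ f t) :
    c - (f p - c) / (t - p) * (q - t) ≤ f q := by
  have hslope : (c - f p) / (t - p) ≤ (f q - c) / (q - t) :=
    calc (c - f p) / (t - p) ≤ (f t - f p) / (t - p) := by gcongr
      _ ≤ (f q - f t) / (q - t) := hf.slope_mono_adjacent hp hq hpt htq
      _ ≤ (f q - c) / (q - t) := by gcongr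
  rw [le_div_iff₀ (by linarith)] at hslope
  have : c - (f p - c) / (t - p) * (q - t) = c + (c - f p) / (t - p) * (q - t) := by ring
  linarith

theorem exists_sub_mul_le (hf : ConvexOn ℝ D f) {t c K : ℝ} (hne : ∃ q ∈ D, t < q)
    (hc : t ∈ D → c ≤ f t) (hK : ∀ q ∈ D, t < q → c - K * (q - t) ≤ f q) :
    ∃ α, ∀ q ∈ D, c - α * (q - t) ≤ f q := by
  set W := (fun q => (c - f q) / (q - t)) '' {q | q ∈ D ∧ t < q}
  have hWbdd : BddAbove W := by
    refine ⟨K, ?_⟩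
    rintro _ ⟨q, ⟨hq, htq⟩, rfl⟩
    rw [div_le_iff₀ (sub_pos.2 htq)]
    linarith [hK q hq htq]
  obtain ⟨r, hr, htr⟩ := hne
  refine ⟨sSup W, fun q hq => ?_⟩
  rcases lt_trichotomy q t with hqt | rfl | htq
  · have htD : t ∈ D := hf.1.ordConnected.out hq hr ⟨hqt.le, htr.le⟩
    have hsup : sSup W ≤ (f q - c) / (t - q) := by
      refine csSup_le ⟨_, r, ⟨hr, htr⟩, rfl⟩ ?_
      rintro _ ⟨p, ⟨hp, htp⟩, rfl⟩
      rw [div_le_iff₀ (sub_pos.2 htp)]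
      linarith [hf.sub_slope_mul_le hq hp hqt htp (hc htD)]
    rw [le_div_iff₀ (sub_pos.2 hqt)] at hsup
    linarith
  · simpa using hc hq
  · have hle := le_csSup hWbdd ⟨q, ⟨hq, htq⟩, rfl⟩
    rw [div_le_iff₀ (sub_pos.2 htq)] at hle
    linarith

end ConvexOn

theorem convexOn_toReal_limsup {ι : Type*} {l : Filter ι} {u : ι → ℝ → ℝ}
    (hu : ∀ i, ConvexOn ℝ univ (u i)) (hbot : ∀ q, limsup (fun i => (u i q : EReal)) l ≠ ⊥) :
    ConvexOn ℝ {q | limsup (fun i => (u i q : EReal)) l ≠ ⊤}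
      (fun q => (limsup (fun i => (u i q : EReal)) l).toReal) := by
  set L : ℝ → EReal := fun q => limsup (fun i => (u i q : EReal)) l
  have hcoe : ∀ q, L q ≠ ⊤ → ((L q).toReal : EReal) = L q := fun q hq =>
    EReal.coe_toReal hq (hbot q)
  have hlt : ∀ q, L q ≠ ⊤ → ∀ ε > 0, ∀ᶠ i in l, u i q < (L q).toReal + ε := by
    intro q hq ε hε
    have : L q < (((L q).toReal + ε : ℝ) : EReal) := by
      conv_lhs => rw [← hcoe q hq]
      exact_mod_cast lt_add_of_pos_right _ hε
    filter_upwards [eventually_lt_of_limsup_lt this] with i hi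
    exact_mod_cast hi
  have key : ∀ ⦃x⦄, L x ≠ ⊤ → ∀ ⦃y⦄, L y ≠ ⊤ → ∀ ⦃a b : ℝ⦄, 0 ≤ a → 0 ≤ b → a + b = 1 →
      L (a * x + b * y) ≤ ((a * (L x).toReal + b * (L y).toReal : ℝ) : EReal) := by
    intro x hx y hy a b ha hb hab
    refine EReal.le_of_forall_lt_iff_le.1 fun z hz => ?_
    obtain ⟨ε, hε, rfl⟩ : ∃ ε > 0, z = a * (L x).toReal + b * (L y).toReal + ε :=
      ⟨_, sub_pos.2 (by exact_mod_cast hz), by ring⟩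
    refine limsup_le_of_le (h := ?_)
    filter_upwards [hlt x hx ε hε, hlt y hy ε hε] with i hix hiy
    have hconv := (hu i).2 (mem_univ x) (mem_univ y) ha hb hab
    simp only [smul_eq_mul] at hconv
    have : u i (a * x + b * y) ≤ a * (L x).toReal + b * (L y).toReal + ε :=
      calc u i (a * x + b * y) ≤ a * u i x + b * u i y := hconv
        _ ≤ a * ((L x).toReal + ε) + b * ((L y).toReal + ε) := by gcongr
        _ = a * (L x).toReal + b * (L y).toReal + ε := by linear_combination ε * hab
    exact_mod_cast this
  refine ⟨fun x hx y hy a b ha hb hab => ?_, fun x hx y hy a b ha hb hab => ?_⟩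
  · exact ne_top_of_le_ne_top (EReal.coe_ne_top _) (key hx hy ha hb hab)
  · have := EReal.toReal_le_toReal (key hx hy ha hb hab) (hbot _) (EReal.coe_ne_top _)
    rwa [EReal.toReal_coe] at this

section LogSumRpow

variable {ι : Type*} (s : Finset ι) {x : ι → ℝ}

theorem convexOn_log_sum_rpow (hx : ∀ i ∈ s, 0 < x i) :
    ConvexOn ℝ univ (fun q : ℝ => log (∑ i ∈ s, x i ^ q)) := by
  rcases s.eq_empty_or_nonempty with rfl | hs
  · simpa using convexOn_const (0 : ℝ) convex_univ
  have hpos : ∀ q : ℝ, 0 < ∑ i ∈ s, x i ^ q := fun q =>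
    sum_pos (fun i hi => rpow_pos_of_pos (hx i hi) q) hs
  refine convexOn_iff_forall_pos.2 ⟨convex_univ, fun a _ b _ l m hl hm hlm => ?_⟩
  simp only [smul_eq_mul]
  have hholder : ∑ i ∈ s, x i ^ (l * a + m * b)
      ≤ (∑ i ∈ s, x i ^ a) ^ l * (∑ i ∈ s, x i ^ b) ^ m := by
    have h := inner_le_Lp_mul_Lq_of_nonneg s (holderConjugate_one_div hl hm hlm)
      (f := fun i => x i ^ (l * a)) (g := fun i => x i ^ (m * b))
      (fun i hi => (rpow_pos_of_pos (hx i hi) _).le) (fun i hi => (rpow_pos_of_pos (hx i hi) _).le)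
    have hcancel : ∀ {c : ℝ}, c ≠ 0 → ∀ y, ∀ i ∈ s, (x i ^ (c * y)) ^ (1 / c) = x i ^ y :=
      fun hc y i hi => by rw [← rpow_mul (hx i hi).le]; field_simp
    rw [sum_congr rfl (hcancel hl.ne' a), sum_congr rfl (hcancel hm.ne' b), one_div_one_div,
      one_div_one_div] at h
    rwa [← sum_congr rfl fun i hi => rpow_add (hx i hi) (l * a) (m * b)] at h
  calc log (∑ i ∈ s, x i ^ (l * a + m * b))
      ≤ log ((∑ i ∈ s, x i ^ a) ^ l * (∑ i ∈ s, x i ^ b) ^ m) :=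
        log_le_log (hpos _) hholder
    _ = l * log (∑ i ∈ s, x i ^ a) + m * log (∑ i ∈ s, x i ^ b) := by
        rw [log_mul (rpow_pos_of_pos (hpos a) l).ne' (rpow_pos_of_pos (hpos b) m).ne',
          log_rpow (hpos a), log_rpow (hpos b)]

theorem antitone_sum_rpow (hx : ∀ i ∈ s, 0 < x i) (hx1 : ∀ i ∈ s, x i ≤ 1) :
    Antitone (fun q : ℝ => ∑ i ∈ s, x i ^ q) := fun _ _ hpq =>
  sum_le_sum fun i hi => rpow_le_rpow_of_exponent_ge (hx i hi) (hx1 i hi) hpq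

theorem neg_mul_log_card_le_log_sum_rpow (hx : ∀ i ∈ s, 0 < x i) (hsum : ∑ i ∈ s, x i = 1)
    {q : ℝ} (hq : 0 ≤ q) : -q * log #s ≤ log (∑ i ∈ s, x i ^ q) := by
  have hs : s.Nonempty := nonempty_of_sum_ne_zero (by rw [hsum]; exact one_ne_zero)
  have hcard : (0 : ℝ) < #s := by exact_mod_cast hs.card_pos
  obtain ⟨i, hi, hxi⟩ : ∃ i ∈ s, (#s : ℝ)⁻¹ ≤ x i := by
    refine exists_le_of_sum_le hs ?_
    rw [sum_const, nsmul_eq_mul, mul_inv_cancel₀ hcard.ne', hsum]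
  calc -q * log #s = log ((#s : ℝ)⁻¹ ^ q) := by
        rw [log_rpow (inv_pos.2 hcard), log_inv]; ring
    _ ≤ log (x i ^ q) := log_le_log (by positivity) (rpow_le_rpow (by positivity) hxi hq)
    _ ≤ log (∑ i ∈ s, x i ^ q) :=
        log_le_log (rpow_pos_of_pos (hx i hi) q)
          (single_le_sum (fun j hj => (rpow_pos_of_pos (hx j hj) q).le) hi)

end LogSumRpow

theorem sum_measure_Ioc_range (μ : Measure ℝ) {a : ℕ → ℝ} (ha : Monotone a) (N : ℕ) :
    ∑ k ∈ range N, μ (Ioc (a k) (a (k + 1))) = μ (Ioc (a 0) (a N)) := by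
  induction N with
  | zero => simp
  | succ N ih =>
    rw [sum_range_succ, ih, ← measure_union (Ioc_disjoint_Ioc_of_le le_rfl) measurableSet_Ioc,
      Ioc_union_Ioc_eq_Ioc (ha N.zero_le) (ha N.le_succ)]

theorem sum_measure_dyadic (ν : Measure ℝ) (n : ℕ) :
    ∑ k ∈ range (2 ^ n), ν (dyadic n k) = ν (Ioc 0 1) := by
  have ha : Monotone fun k : ℕ => (k : ℝ) / 2 ^ n := fun i j hij => by
    dsimp only; gcongr
  simpa [dyadic, Nat.cast_pow] using sum_measure_Ioc_range ν ha (2 ^ n)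

/-- The index set of `D_{ν,n}`. -/
noncomputable def dyadicSupport (ν : Measure ℝ) (n : ℕ) : Finset ℕ :=
  (range (2 ^ n)).filter fun k => ν (dyadic n k) ≠ 0

theorem betan_eq (ν : Measure ℝ) (n : ℕ) (q : ℝ) :
    betan ν n q = ((n : ℝ) * log 2)⁻¹ *
      log (∑ k ∈ dyadicSupport ν n, (ν (dyadic n k)).toReal ^ q) := by
  rw [betan, one_div, dyadicSupport]

theorem log_card_dyadicSupport_le (ν : Measure ℝ) (n : ℕ) :
    log #(dyadicSupport ν n) ≤ n * log 2 := by
  rcases (dyadicSupport ν n).eq_empty_or_nonempty with h | h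
  · simp [h]; positivity
  rw [← log_pow]
  exact log_le_log (by exact_mod_cast h.card_pos)
    (by exact_mod_cast (card_filter_le _ _).trans (card_range _).le)

theorem betan_zero_le_one (ν : Measure ℝ) (n : ℕ) : betan ν n 0 ≤ 1 := by
  rw [betan_eq]
  simpa using inv_mul_le_one_of_le₀ (log_card_dyadicSupport_le ν n) (by positivity)

theorem toReal_pos_of_mem_dyadicSupport {ν : Measure ℝ} [IsFiniteMeasure ν] {n k : ℕ}
    (hk : k ∈ dyadicSupport ν n) : 0 < (ν (dyadic n k)).toReal :=
  ENNReal.toReal_pos (mem_filter.1 hk).2 (measure_ne_top ν _)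

theorem convexOn_betan (ν : Measure ℝ) [IsFiniteMeasure ν] (n : ℕ) :
    ConvexOn ℝ univ (betan ν n) := by
  refine ((convexOn_log_sum_rpow (dyadicSupport ν n) fun k hk =>
    toReal_pos_of_mem_dyadicSupport hk).smul (c := ((n : ℝ) * log 2)⁻¹) (by positivity)).congr ?_
  intro q _
  rw [betan_eq]
  rfl

section ProbabilityMeasure

variable {ν : Measure ℝ} [IsProbabilityMeasure ν]

theorem sum_dyadicSupport_toReal (hν : ν (Ioc 0 1) = 1) (n : ℕ) :
    ∑ k ∈ dyadicSupport ν n, (ν (dyadic n k)).toReal = 1 := by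
  rw [dyadicSupport, sum_filter_of_ne (p := fun k => ν (dyadic n k) ≠ 0)
      fun k _ h h0 => h (by simp [h0]),
    ← ENNReal.toReal_sum fun k _ => measure_ne_top ν _, sum_measure_dyadic, hν, ENNReal.toReal_one]

theorem dyadicSupport_nonempty (hν : ν (Ioc 0 1) = 1) (n : ℕ) : (dyadicSupport ν n).Nonempty :=
  nonempty_of_sum_ne_zero (by rw [sum_dyadicSupport_toReal hν n]; exact one_ne_zero)

theorem antitone_betan (hν : ν (Ioc 0 1) = 1) (n : ℕ) : Antitone (betan ν n) := by
  intro p q hpq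
  have hpos : ∀ r : ℝ, 0 < ∑ k ∈ dyadicSupport ν n, (ν (dyadic n k)).toReal ^ r := fun r =>
    sum_pos (fun k hk => rpow_pos_of_pos (toReal_pos_of_mem_dyadicSupport hk) r)
      (dyadicSupport_nonempty hν n)
  simp only [betan_eq]
  gcongr ?_ * log ?_
  · exact hpos q
  · exact antitone_sum_rpow _ (fun k hk => toReal_pos_of_mem_dyadicSupport hk)
      (fun k _ => ENNReal.toReal_le_of_le_ofReal zero_le_one (by simpa using prob_le_one)) hpq

theorem betan_one (hν : ν (Ioc 0 1) = 1) (n : ℕ) : betan ν n 1 = 0 := by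
  simp [betan_eq, sum_dyadicSupport_toReal hν]

theorem neg_le_betan (hν : ν (Ioc 0 1) = 1) (n : ℕ) {q : ℝ} (hq : 0 ≤ q) : -q ≤ betan ν n q := by
  rcases Nat.eq_zero_or_pos n with rfl | hn
  · simpa [betan_eq] using hq
  have hc : (0 : ℝ) < n * log 2 := by positivity
  have h := neg_mul_log_card_le_log_sum_rpow _ (fun k hk => toReal_pos_of_mem_dyadicSupport hk)
    (sum_dyadicSupport_toReal hν n) hq
  rw [betan_eq, le_inv_mul_iff₀ hc]
  nlinarith [log_card_dyadicSupport_le ν n]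

theorem lqSpectrumE_one (hν : ν (Ioc 0 1) = 1) : lqSpectrumE ν 1 = 0 := by
  simp [lqSpectrumE, betan_one hν]

theorem antitone_lqSpectrumE (hν : ν (Ioc 0 1) = 1) : Antitone (lqSpectrumE ν) := fun _ _ hpq =>
  limsup_le_limsup (Eventually.of_forall fun n => EReal.coe_le_coe (antitone_betan hν n hpq))

theorem lqSpectrumE_nonneg (hν : ν (Ioc 0 1) = 1) {q : ℝ} (hq : q ≤ 1) : 0 ≤ lqSpectrumE ν q :=
  lqSpectrumE_one hν ▸ antitone_lqSpectrumE hν hq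

theorem neg_le_lqSpectrumE (hν : ν (Ioc 0 1) = 1) {q : ℝ} (hq : 0 ≤ q) :
    ((-q : ℝ) : EReal) ≤ lqSpectrumE ν q :=
  le_limsup_of_frequently_le' (Frequently.of_forall fun n =>
    EReal.coe_le_coe (neg_le_betan hν n hq))

theorem lqSpectrumE_ne_bot (hν : ν (Ioc 0 1) = 1) (q : ℝ) : lqSpectrumE ν q ≠ ⊥ := by
  rcases le_total q 1 with hq | hq
  · exact ne_bot_of_le_ne_bot EReal.zero_ne_bot (lqSpectrumE_nonneg hν hq)
  · exact ne_bot_of_le_ne_bot (EReal.coe_ne_bot _) (neg_le_lqSpectrumE hν (by linarith))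

theorem convexOn_lqSpectrumE (hν : ν (Ioc 0 1) = 1) :
    ConvexOn ℝ {q | lqSpectrumE ν q ≠ ⊤} (fun q => (lqSpectrumE ν q).toReal) :=
  convexOn_toReal_limsup (convexOn_betan ν) (lqSpectrumE_ne_bot hν)

end ProbabilityMeasure

theorem lqSpectrumE_zero_ne_top (ν : Measure ℝ) : lqSpectrumE ν 0 ≠ ⊤ :=
  ne_top_of_le_ne_top (EReal.coe_ne_top 1)
    (limsup_le_of_le (h := Eventually.of_forall fun n => EReal.coe_le_coe (betan_zero_le_one ν n)))

theorem legendre_div_le {ν : Measure ℝ} {α q : ℝ} (hα : 0 ≤ α)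
    (hq : lqSpectrumE ν q ≤ (q : EReal)) :
    legendre ν α / ((1 : EReal) + (α : EReal)) ≤ q := by
  have h1α : (0 : EReal) < ((1 + α : ℝ) : EReal) := by exact_mod_cast (by linarith : 0 < 1 + α)
  rw [← EReal.coe_one, ← EReal.coe_add, EReal.div_le_iff_le_mul h1α (EReal.coe_ne_top _)]
  calc legendre ν α ≤ lqSpectrumE ν q + ((α * q : ℝ) : EReal) := iInf_le _ q
    _ ≤ (q : EReal) + ((α * q : ℝ) : EReal) := by gcongr
    _ = ((1 + α : ℝ) : EReal) * q := by norm_cast; ring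

theorem exists_le_legendre_div {ν : Measure ℝ} [IsProbabilityMeasure ν]
    (hν : ν (Ioc 0 1) = 1) {t : ℝ} (ht0 : 0 ≤ t) (ht1 : t < 1)
    (hbt : (t : EReal) ≤ lqSpectrumE ν t) :
    ∃ α : ℝ, 0 ≤ α ∧ (t : EReal) ≤ legendre ν α / ((1 : EReal) + (α : EReal)) := by
  set D := {q | lqSpectrumE ν q ≠ ⊤}
  set f := fun q => (lqSpectrumE ν q).toReal
  have hf := convexOn_lqSpectrumE hν
  have hcoe : ∀ q ∈ D, (f q : EReal) = lqSpectrumE ν q := fun q hq =>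
    EReal.coe_toReal hq (lqSpectrumE_ne_bot hν q)
  have h0D : 0 ∈ D := lqSpectrumE_zero_ne_top ν
  have h1D : 1 ∈ D := by simp [D, lqSpectrumE_one hν]
  have hf1 : f 1 = 0 := by simp [f, lqSpectrumE_one hν]
  have htD : t ∈ D := ne_top_of_le_ne_top h0D (antitone_lqSpectrumE hν ht0)
  have hft : t ≤ f t := by rw [← hcoe t htD] at hbt; exact_mod_cast hbt
  obtain ⟨K, hK⟩ : ∃ K, ∀ q ∈ D, t < q → t - K * (q - t) ≤ f q := by
    -- for `t > 0` the chord from `0` gives `K`; at `t = 0` the domain may have no point on the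
    -- left, and `β(q) ≥ -q` gives `K = 1`
    rcases ht0.eq_or_lt with rfl | ht0
    · refine ⟨1, fun q hq hq0 => ?_⟩
      have h := neg_le_lqSpectrumE hν hq0.le
      rw [← hcoe q hq] at h
      have : -q ≤ f q := by exact_mod_cast h
      linarith
    · exact ⟨_, fun q hq htq => hf.sub_slope_mul_le h0D hq ht0 htq hft⟩
  obtain ⟨α, hα⟩ := hf.exists_sub_mul_le ⟨1, h1D, ht1⟩ (fun _ => hft) hK
  have hα0 : 0 ≤ α := by nlinarith [hα 1 h1D]
  refine ⟨α, hα0, ?_⟩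
  have h1α : (0 : EReal) < ((1 + α : ℝ) : EReal) := by exact_mod_cast (by linarith : 0 < 1 + α)
  rw [← EReal.coe_one, ← EReal.coe_add, EReal.le_div_iff_mul_le h1α (EReal.coe_ne_top _)]
  refine le_iInf fun q => ?_
  by_cases hq : q ∈ D
  · rw [← hcoe q hq, ← EReal.coe_mul, ← EReal.coe_add, EReal.coe_le_coe_iff]
    linarith [hα q hq]
  · rw [show lqSpectrumE ν q = ⊤ from not_not.1 hq, EReal.top_add_coe]
    exact le_top

/-- The fixed point `q̄_ν = inf{q > 0 : β_ν(q) ≤ q}` equals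
`sup_{α ≥ 0} β̂_ν(α)/(1+α)`. -/
theorem stmt9 (ν : Measure ℝ) [IsProbabilityMeasure ν] (hν : ν (Set.Ioc 0 1) = 1)
    (qbar : ℝ)
    (hqbar : qbar = sInf {q : ℝ | 0 < q ∧ lqSpectrumE ν q ≤ ((q : ℝ) : EReal)}) :
    ((qbar : ℝ) : EReal) =
      ⨆ α : {a : ℝ // 0 ≤ a}, legendre ν α / ((1 : EReal) + ((α : ℝ) : EReal)) := by
  set S := {q : ℝ | 0 < q ∧ lqSpectrumE ν q ≤ ((q : ℝ) : EReal)}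
  have h1S : 1 ∈ S := ⟨one_pos, by rw [lqSpectrumE_one hν]; exact_mod_cast zero_le_one⟩
  have hSbdd : BddBelow S := ⟨0, fun q hq => hq.1.le⟩
  apply le_antisymm
  · refine EReal.ge_of_forall_gt_iff_ge.1 fun t htq => ?_
    have ht : t < qbar := by exact_mod_cast htq
    have ht1 : max t 0 < 1 := max_lt (ht.trans_le (hqbar ▸ csInf_le hSbdd h1S)) one_pos
    have hbt : ((max t 0 : ℝ) : EReal) ≤ lqSpectrumE ν (max t 0) := by
      rcases le_or_gt t 0 with ht0 | ht0
      · rw [max_eq_right ht0]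
        exact lqSpectrumE_nonneg hν zero_le_one
      · rw [max_eq_left ht0.le]
        by_contra! hlt
        exact notMem_of_lt_csInf (hqbar ▸ ht) hSbdd ⟨ht0, hlt.le⟩
    obtain ⟨α, hα, hle⟩ := exists_le_legendre_div hν (le_max_right t 0) ht1 hbt
    calc (t : EReal) ≤ (max t 0 : ℝ) := by exact_mod_cast le_max_left t 0
      _ ≤ _ := hle
      _ ≤ _ := le_iSup_of_le (⟨α, hα⟩ : {a : ℝ // 0 ≤ a}) le_rfl
  · refine iSup_le fun α => EReal.le_of_forall_lt_iff_le.1 fun r hr => ?_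
    have hr : sInf S < r := hqbar ▸ (by exact_mod_cast hr : qbar < r)
    obtain ⟨q, hqS, hqr⟩ := exists_lt_of_csInf_lt ⟨1, h1S⟩ hr
    exact (legendre_div_le α.2 hqS.2).trans (by exact_mod_cast hqr.le)
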